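/- arXiv:1507.04323 — 4 statements merged into one kernel-verified Lean document; each statement's English description precedes it below -/
import Mathlib

section
/- For every integer r ≥ 2 and every nonnegative integer d, f_r(d) ≥ (2r-1)d + 3r) / (r(d² + 5d + 5)), i.e., f_r(d) ≥ ((2r-1)*d + 3r) / (r*(d^2 + 5*d + 5)). -/
/-!
The recursion writes `f r (d+1)` as `(1 + A f r d) / B` with `A = (r-1)(d+1)² - (d+1) ≥ 0` and
`B = 1 + (r-1)(d+1)² > 0`, so it is monotone in `f r d`, and by induction it suffices that the
bound `g d = ((2r-1)d + 3r) / (r(d² + 5d + 5))` satisfies `g (d+1) ≤ (1 + A g d) / B`. After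
clearing denominators, the gap is a polynomial in `r - 2` and `u = d² + 3d` with positive
coefficients.
-/

noncomputable def f (r : ℕ) : ℕ → ℝ
  | 0 => 1
  | (d+1) => (1 + (((r : ℝ) - 1) * ((d:ℝ)+1)^2 - ((d:ℝ)+1)) * f r d) /
      (1 + ((r : ℝ) - 1) * ((d:ℝ)+1)^2)

noncomputable def lowerBound (r x : ℝ) : ℝ :=
  ((2 * r - 1) * x + 3 * r) / (r * (x ^ 2 + 5 * x + 5))

lemma lowerBound_step_gap (r x : ℝ) (hr : r ≠ 0) (hx : 0 ≤ x)
    (hB : 1 + (r - 1) * (x + 1) ^ 2 ≠ 0) :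
    (1 + ((r - 1) * (x + 1) ^ 2 - (x + 1)) * lowerBound r x) / (1 + (r - 1) * (x + 1) ^ 2)
      - lowerBound r (x + 1) =
    2 * ((r - 2) ^ 2 * (x ^ 2 + 3 * x + 2) ^ 2 + (r - 2) * (2 * (x ^ 2 + 3 * x) ^ 2
      + 10 * (x ^ 2 + 3 * x) + 13) + ((x ^ 2 + 3 * x) ^ 2 + 6 * (x ^ 2 + 3 * x) + 10)) /
    (r * (x ^ 2 + 5 * x + 5) * ((x + 1) ^ 2 + 5 * (x + 1) + 5) * (1 + (r - 1) * (x + 1) ^ 2)) := by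
  unfold lowerBound
  have : x ^ 2 + 5 * x + 5 ≠ 0 := by positivity
  have : (x + 1) ^ 2 + 5 * (x + 1) + 5 ≠ 0 := by positivity
  field_simp
  ring

lemma lowerBound_succ_le (r x : ℝ) (hr : 2 ≤ r) (hx : 0 ≤ x) :
    lowerBound r (x + 1) ≤
      (1 + ((r - 1) * (x + 1) ^ 2 - (x + 1)) * lowerBound r x) / (1 + (r - 1) * (x + 1) ^ 2) := by
  have hr2 : 0 ≤ r - 2 := by linarith
  have hr1 : 0 ≤ r - 1 := by linarith
  rw [← sub_nonneg, lowerBound_step_gap r x (by positivity) hx (by positivity)]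
  positivity

theorem stmt_0 (r : ℕ) (hr : 2 ≤ r) (d : ℕ) :
    f r d ≥ ((2 * (r : ℝ) - 1) * d + 3 * r) / (r * ((d : ℝ)^2 + 5 * d + 5)) := by
  have hr' : (2 : ℝ) ≤ r := by exact_mod_cast hr
  change lowerBound r d ≤ f r d
  induction d with
  | zero =>
    rw [f, Nat.cast_zero, lowerBound, div_le_one (by positivity)]
    linarith
  | succ d ih =>
    have hr1 : (0 : ℝ) ≤ r - 1 := by linarith
    have hA : 0 ≤ ((r : ℝ) - 1) * ((d : ℝ) + 1) ^ 2 - ((d : ℝ) + 1) := by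
      nlinarith [d.cast_nonneg (α := ℝ)]
    rw [f, Nat.cast_succ]
    calc lowerBound r ((d : ℝ) + 1)
        ≤ (1 + ((r - 1) * ((d : ℝ) + 1) ^ 2 - ((d : ℝ) + 1)) * lowerBound r d) /
            (1 + (r - 1) * ((d : ℝ) + 1) ^ 2) := lowerBound_succ_le r d hr' d.cast_nonneg
      _ ≤ _ := by gcongr
end

section
/- For every integer r ≥ 2 and every nonnegative integer d, f_r(d) - f_r(d+1) ≥ f_r(d+1) - f_r(d+2); that is, the sequence f_r is convex. -/
noncomputable def fStep (r n x : ℝ) : ℝ :=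
  (1 + ((r - 1) * (n + 1) ^ 2 - (n + 1)) * x) / (1 + (r - 1) * (n + 1) ^ 2)

lemma f_succ (r d : ℕ) : f r (d + 1) = fStep r d (f r d) := rfl

section fStep

variable {r n x : ℝ}

lemma fStep_denom_pos (hr : 1 ≤ r) : 0 < 1 + (r - 1) * (n + 1) ^ 2 := by
  have : 0 ≤ (r - 1) * (n + 1) ^ 2 := mul_nonneg (by linarith) (sq_nonneg _)
  linarith

lemma fStep_bound_defect (hD : 1 + (r - 1) * (n + 1) ^ 2 ≠ 0) :
    (n + 2) * (1 + (r - 1) * (n + 1) ^ 2) * (r * ((n + 3) * fStep r n x - 1) - (r - 1)) =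
      (n + 1) * (n + 3) * ((r - 1) * (n + 1) - 1) * (r * ((n + 2) * x - 1) - (r - 1)) +
        (2 * (r - 1) * (n + 1) - 1) * ((r - 1) * (n + 1) - 1) := by
  unfold fStep
  field_simp
  ring

lemma fStep_preserves_bound (hr : 2 ≤ r) (hn : 0 ≤ n) (hx : r - 1 ≤ r * ((n + 2) * x - 1)) :
    r - 1 ≤ r * ((n + 3) * fStep r n x - 1) := by
  have hD := fStep_denom_pos (n := n) (by linarith : (1 : ℝ) ≤ r)
  have hm : 0 ≤ (r - 1) * (n + 1) - 1 := by nlinarith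
  have hdefect : 0 ≤ (n + 2) * (1 + (r - 1) * (n + 1) ^ 2) *
      (r * ((n + 3) * fStep r n x - 1) - (r - 1)) := by
    rw [fStep_bound_defect hD.ne']
    have := mul_nonneg (mul_nonneg (by positivity : 0 ≤ (n + 1) * (n + 3)) hm) (sub_nonneg.2 hx)
    nlinarith
  have := (mul_nonneg_iff_of_pos_left (by positivity)).1 hdefect
  linarith

lemma fStep_second_difference (hn : n + 2 ≠ 0) (hD₁ : 1 + (r - 1) * (n + 1) ^ 2 ≠ 0)
    (hD₂ : 1 + (r - 1) * (n + 1 + 1) ^ 2 ≠ 0) :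
    x - fStep r n x - (fStep r n x - fStep r (n + 1) (fStep r n x)) =
      (r * (n ^ 2 + 5 * n + 5) * ((n + 2) * x - 1) - (1 + (r - 1) * (n + 1) ^ 2)) /
        ((n + 2) * (1 + (r - 1) * (n + 1) ^ 2) * (1 + (r - 1) * (n + 1 + 1) ^ 2)) := by
  unfold fStep
  field_simp
  ring

lemma fStep_convex (hr : 2 ≤ r) (hn : 0 ≤ n) (hx : r - 1 ≤ r * ((n + 2) * x - 1)) :
    x - fStep r n x ≥ fStep r n x - fStep r (n + 1) (fStep r n x) := by
  have hD₁ := fStep_denom_pos (n := n) (by linarith : (1 : ℝ) ≤ r)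
  have hD₂ := fStep_denom_pos (n := n + 1) (by linarith : (1 : ℝ) ≤ r)
  rw [ge_iff_le, ← sub_nonneg, fStep_second_difference (by linarith) hD₁.ne' hD₂.ne']
  have hnum : 1 + (r - 1) * (n + 1) ^ 2 ≤ r * (n ^ 2 + 5 * n + 5) * ((n + 2) * x - 1) :=
    calc 1 + (r - 1) * (n + 1) ^ 2 ≤ (r - 1) * (n ^ 2 + 5 * n + 5) := by nlinarith
      _ ≤ r * (n ^ 2 + 5 * n + 5) * ((n + 2) * x - 1) := by
        nlinarith [mul_le_mul_of_nonneg_left hx (by positivity : (0 : ℝ) ≤ n ^ 2 + 5 * n + 5)]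
  exact div_nonneg (sub_nonneg.2 hnum) (by positivity)

end fStep

lemma f_lower_bound (r : ℕ) (hr : 2 ≤ r) (d : ℕ) :
    (r : ℝ) - 1 ≤ r * ((d + 2) * f r d - 1) := by
  have hr' : (2 : ℝ) ≤ r := by exact_mod_cast hr
  induction d with
  | zero => norm_num [f]
  | succ d ih =>
    rw [f_succ, Nat.cast_succ, show (d : ℝ) + 1 + 2 = d + 3 by ring]
    exact fStep_preserves_bound hr' d.cast_nonneg ih

theorem stmt_1 (r : ℕ) (hr : 2 ≤ r) (d : ℕ) :
    f r d - f r (d + 1) ≥ f r (d + 1) - f r (d + 2) := by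
  have hr' : (2 : ℝ) ≤ r := by exact_mod_cast hr
  have h := fStep_convex hr' d.cast_nonneg (f_lower_bound r hr d)
  rwa [f_succ r (d + 1), f_succ r d, Nat.cast_succ]
end

section
/- For all integers r ≥ 3 and d ≥ 2, f_r(d) > f_CT(r)(d); that is, the function f_r from the recursion strictly dominates the Caro–Tuza function at every degree d ≥ 2. -/
noncomputable def fCT (r d : ℕ) : ℝ :=
  ∏ i ∈ Finset.Icc 1 d, ((i : ℝ) / ((i : ℝ) + 1 / ((r : ℝ) - 1)))

/-!
Write `s = r - 1`. Both sequences start with `f 1 = fCT 1 = s / (s + 1)`, and `fCT` decreases, so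
`fCT n ≤ s / (s + 1)` for `n ≥ 1`. Under this bound one step of the recursion for `f` beats one
factor of `fCT`: after clearing denominators, `x * (D / (D + 1/s)) < (1 + (s D² - D) x) / (1 + s D²)`
reduces to `x D (s + 1) < s D + 1`. Since the recursion is monotone in its argument, `fCT ≤ f`
propagates and becomes strict from `d = 2` on.
-/

lemma mul_div_add_inv_lt_recursion_step {s D x y : ℝ} (hs : 0 < s) (hsD : 1 ≤ s * D)
    (hxs : x * (s + 1) ≤ s) (hxy : x ≤ y) :
    x * (D / (D + 1 / s)) < (1 + (s * D ^ 2 - D) * y) / (1 + s * D ^ 2) := by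
  have hD : 0 < D := pos_of_mul_pos_right (by linarith) hs.le
  have hden : 0 < 1 + s * D ^ 2 := by positivity
  have hfactor : D / (D + 1 / s) = s * D / (s * D + 1) := by
    field_simp
  calc x * (D / (D + 1 / s)) < (1 + (s * D ^ 2 - D) * x) / (1 + s * D ^ 2) := by
        rw [hfactor, ← mul_div_assoc, div_lt_div_iff₀ (by positivity) hden]
        nlinarith [mul_le_mul_of_nonneg_right hxs hD.le]
    _ ≤ (1 + (s * D ^ 2 - D) * y) / (1 + s * D ^ 2) := by
        gcongr
        nlinarith

section

variable {r : ℕ}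

lemma fCT_zero : fCT r 0 = 1 := by
  simp [fCT]

lemma fCT_succ (n : ℕ) :
    fCT r (n + 1) = fCT r n * (((n : ℝ) + 1) / ((n + 1) + 1 / ((r : ℝ) - 1))) := by
  rw [fCT, Finset.prod_Icc_succ_top (Nat.le_add_left 1 n)]
  push_cast
  rfl

lemma one_le_cast_sub_one (hr : 2 ≤ r) : (1 : ℝ) ≤ (r : ℝ) - 1 := by
  have : (2 : ℝ) ≤ r := by exact_mod_cast hr
  linarith

lemma fCT_one (hr : 2 ≤ r) : fCT r 1 = ((r : ℝ) - 1) / ((r - 1) + 1) := by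
  have hs := one_le_cast_sub_one hr
  rw [fCT_succ, fCT_zero]
  field_simp
  ring

lemma f_one_eq_fCT_one (hr : 2 ≤ r) : f r 1 = fCT r 1 := by
  have hs := one_le_cast_sub_one hr
  rw [fCT_one hr, f, f]
  field_simp
  ring

lemma fCT_succ_le (hr : 2 ≤ r) (n : ℕ) : fCT r (n + 1) ≤ fCT r n := by
  have hs := one_le_cast_sub_one hr
  have hnonneg : 0 ≤ fCT r n := Finset.prod_nonneg fun i _ => by positivity
  rw [fCT_succ]
  refine mul_le_of_le_one_right hnonneg ((div_le_one (by positivity)).2 ?_)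
  have : 0 < 1 / ((r : ℝ) - 1) := by positivity
  linarith

lemma fCT_succ_lt_f_succ (hr : 2 ≤ r) {n : ℕ} (hn : 1 ≤ n) (h : fCT r n ≤ f r n) :
    fCT r (n + 1) < f r (n + 1) := by
  have hs := one_le_cast_sub_one hr
  have hbound : fCT r n ≤ fCT r 1 :=
    antitone_nat_of_succ_le (fCT_succ_le hr) hn
  rw [fCT_succ, f]
  refine mul_div_add_inv_lt_recursion_step (by linarith) ?_ ?_ h
  · nlinarith [(Nat.cast_nonneg n : (0 : ℝ) ≤ n)]
  · rw [fCT_one hr] at hbound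
    exact (le_div_iff₀ (by linarith)).1 hbound

lemma fCT_le_f (hr : 2 ≤ r) (n : ℕ) : fCT r n ≤ f r n := by
  induction n with
  | zero => rw [fCT_zero, f]
  | succ n ih =>
    rcases Nat.eq_zero_or_pos n with rfl | hn
    · exact (f_one_eq_fCT_one hr).ge
    · exact (fCT_succ_lt_f_succ hr hn ih).le

end

theorem stmt_7 (r d : ℕ) (hr : 3 ≤ r) (hd : 2 ≤ d) :
    f r d > fCT r d := by
  obtain ⟨n, rfl⟩ : ∃ n, d = n + 1 := ⟨d - 1, by omega⟩
  have hr2 : 2 ≤ r := by omega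
  exact fCT_succ_lt_f_succ hr2 (by omega) (fCT_le_f hr2 n)
end

section
/- Let H be an r-uniform linear triangle-free hypergraph with r ≥ 2, let x be a vertex, and let R be a set of neighbors of x such that every edge containing x meets R in exactly one vertex. Then for every vertex z ∈ V(H) \ ({x} ∪ R), the degree of z in H - ({x} ∪ R) equals d_H(z) - |N_H(z) ∩ R|. -/
open scoped Classical

/-- The degree of a vertex `u`: the number of edges containing `u`. -/
noncomputable def hdeg {α : Type*} (E : Finset (Finset α)) (u : α) : ℕ :=
  (E.filter (fun e => u ∈ e)).card

/-- The (weak) independence number: the maximum cardinality of a subset of the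
vertex set `V` containing no edge of `E`. -/
noncomputable def indepNum {α : Type*} (V : Finset α) (E : Finset (Finset α)) : ℕ :=
  ((V.powerset.filter (fun I => ∀ e ∈ E, ¬ e ⊆ I)).sup Finset.card)

/-- The neighborhood of `u` within the vertex set `V`. -/
noncomputable def nbhd {α : Type*} [DecidableEq α] (V : Finset α) (E : Finset (Finset α))
    (u : α) : Finset α :=
  V.filter (fun v => v ≠ u ∧ ∃ e ∈ E, u ∈ e ∧ v ∈ e)

/-- `H` is linear: two distinct edges share at most one vertex. -/
def Linear {α : Type*} [DecidableEq α] (E : Finset (Finset α)) : Prop :=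
  ∀ e₁ ∈ E, ∀ e₂ ∈ E, e₁ ≠ e₂ → (e₁ ∩ e₂).card ≤ 1

/-- `H` is `r`-uniform: every edge has cardinality `r`. -/
def Uniform {α : Type*} (E : Finset (Finset α)) (r : ℕ) : Prop :=
  ∀ e ∈ E, e.card = r

/-- `H` is triangle-free. -/
def TriangleFree {α : Type*} [DecidableEq α] (E : Finset (Finset α)) : Prop :=
  ¬ ∃ u₁ u₂ u₃ : α, ∃ e₁ ∈ E, ∃ e₂ ∈ E, ∃ e₃ ∈ E,
      u₁ ≠ u₂ ∧ u₁ ≠ u₃ ∧ u₂ ≠ u₃ ∧ e₁ ≠ e₂ ∧ e₁ ≠ e₃ ∧ e₂ ≠ e₃ ∧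
      ({u₁, u₂, u₃} : Finset α) \ {u₁} ⊆ e₁ ∧
      ({u₁, u₂, u₃} : Finset α) \ {u₂} ⊆ e₂ ∧
      ({u₁, u₂, u₃} : Finset α) \ {u₃} ⊆ e₃


/-!
An edge through `z` that meets `{x} ∪ R` meets `R` (edges through `x` do by assumption) and meets it
in a single vertex: two vertices `w₁ ≠ w₂` of `R` on an edge `e ∌ x` would, together with the edges
joining `x` to `w₁` and to `w₂`, form a triangle. By linearity the edges through `z` meeting `R`
correspond bijectively to the neighbours of `z` in `R`, so exactly `|N(z) ∩ R|` of the `d(z)` edges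
through `z` are removed.
-/

open Finset

/-- `hdeg` decides membership classically; this restates it with the ambient `DecidableEq`. -/
theorem hdeg_eq_card_filter {α : Type*} [DecidableEq α] (E : Finset (Finset α)) (u : α) :
    hdeg E u = (E.filter (fun e => u ∈ e)).card := by
  rw [hdeg]
  congr

theorem Linear.eq_of_mem_of_mem {α : Type*} [DecidableEq α] {E : Finset (Finset α)}
    (hlin : Linear E) {e₁ e₂ : Finset α} (he₁ : e₁ ∈ E) (he₂ : e₂ ∈ E) {u v : α} (huv : u ≠ v)
    (hu₁ : u ∈ e₁) (hv₁ : v ∈ e₁) (hu₂ : u ∈ e₂) (hv₂ : v ∈ e₂) : e₁ = e₂ := by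
  by_contra hne
  have hpair : ({u, v} : Finset α) ⊆ e₁ ∩ e₂ := by
    intro a ha
    rcases mem_insert.1 ha with rfl | ha
    · exact mem_inter.2 ⟨hu₁, hu₂⟩
    · rw [mem_singleton.1 ha]; exact mem_inter.2 ⟨hv₁, hv₂⟩
  have := card_le_card hpair
  rw [card_pair huv] at this
  exact absurd (hlin e₁ he₁ e₂ he₂ hne) (by omega)

theorem TriangleFree.false_of_triangle {α : Type*} [DecidableEq α] {E : Finset (Finset α)}
    (htf : TriangleFree E) {u₁ u₂ u₃ : α} {e₁ e₂ e₃ : Finset α}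
    (he₁ : e₁ ∈ E) (he₂ : e₂ ∈ E) (he₃ : e₃ ∈ E)
    (h₁₂ : u₁ ≠ u₂) (h₁₃ : u₁ ≠ u₃) (h₂₃ : u₂ ≠ u₃)
    (he₁₂ : e₁ ≠ e₂) (he₁₃ : e₁ ≠ e₃) (he₂₃ : e₂ ≠ e₃)
    (hu₂e₁ : u₂ ∈ e₁) (hu₃e₁ : u₃ ∈ e₁) (hu₁e₂ : u₁ ∈ e₂) (hu₃e₂ : u₃ ∈ e₂)
    (hu₁e₃ : u₁ ∈ e₃) (hu₂e₃ : u₂ ∈ e₃) : False := by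
  refine htf ⟨u₁, u₂, u₃, e₁, he₁, e₂, he₂, e₃, he₃, h₁₂, h₁₃, h₂₃, he₁₂, he₁₃, he₂₃, ?_, ?_, ?_⟩ <;>
  · intro a ha
    simp only [mem_sdiff, mem_insert, mem_singleton] at ha
    rcases ha with ⟨rfl | rfl | rfl, ha⟩ <;> simp_all

section

variable {α : Type*} [DecidableEq α] {V : Finset α} {E : Finset (Finset α)} {x : α} {R : Finset α}

theorem card_inter_le_one_of_triangleFree (hlin : Linear E) (htf : TriangleFree E)
    (hR : R ⊆ nbhd V E x) (hmeet : ∀ e ∈ E, x ∈ e → (e ∩ R).card = 1) {e : Finset α}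
    (he : e ∈ E) : (e ∩ R).card ≤ 1 := by
  by_cases hxe : x ∈ e
  · exact (hmeet e he hxe).le
  refine card_le_one.2 fun w₁ hw₁ w₂ hw₂ => ?_
  by_contra hne
  rw [mem_inter] at hw₁ hw₂
  obtain ⟨hxw₁, f₁, hf₁, hxf₁, hw₁f₁⟩ := (mem_filter.1 (hR hw₁.2)).2
  obtain ⟨hxw₂, f₂, hf₂, hxf₂, hw₂f₂⟩ := (mem_filter.1 (hR hw₂.2)).2
  have hef₁ : e ≠ f₁ := fun h => hxe (h ▸ hxf₁)
  have hef₂ : e ≠ f₂ := fun h => hxe (h ▸ hxf₂)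
  have hf₁₂ : f₂ ≠ f₁ := by
    rintro rfl
    exact hef₂ (hlin.eq_of_mem_of_mem he hf₂ hne hw₁.1 hw₂.1 hw₁f₁ hw₂f₂)
  exact htf.false_of_triangle he hf₂ hf₁ hxw₁.symm hxw₂.symm hne hef₂ hef₁ hf₁₂
    hw₁.1 hw₂.1 hxf₂ hw₂f₂ hxf₁ hw₁f₁

theorem disjoint_insert_iff_disjoint_of_meet (hmeet : ∀ e ∈ E, x ∈ e → (e ∩ R).card = 1)
    {e : Finset α} (he : e ∈ E) : Disjoint e (insert x R) ↔ Disjoint e R := by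
  refine disjoint_insert_right.trans ⟨And.right, fun hdisj => ⟨fun hxe => ?_, hdisj⟩⟩
  have := hmeet e he hxe
  rw [disjoint_iff_inter_eq_empty.1 hdisj, card_empty] at this
  exact zero_ne_one this

end

theorem card_filter_not_disjoint_eq_sum_card_inter {α : Type*} [DecidableEq α]
    {S : Finset (Finset α)} {R : Finset α} (hS : ∀ e ∈ S, (e ∩ R).card ≤ 1) :
    (S.filter (fun e => ¬ Disjoint e R)).card = ∑ e ∈ S, (e ∩ R).card := by
  rw [card_filter]
  refine sum_congr rfl fun e he => ?_
  by_cases hdisj : Disjoint e R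
  · rw [if_neg (not_not.2 hdisj), disjoint_iff_inter_eq_empty.1 hdisj, card_empty]
  · rw [if_pos hdisj]
    exact le_antisymm (card_pos.2 (not_disjoint_iff_nonempty_inter.1 hdisj)) (hS e he)

theorem card_nbhd_inter_eq_sum_card_inter {α : Type*} [DecidableEq α] {V : Finset α}
    {E : Finset (Finset α)} (hlin : Linear E) {R : Finset α} (hRV : R ⊆ V) {z : α}
    (hzR : z ∉ R) :
    (nbhd V E z ∩ R).card = ∑ e ∈ E.filter (fun e => z ∈ e), (e ∩ R).card := by
  have hunion : nbhd V E z ∩ R = (E.filter (fun e => z ∈ e)).biUnion (· ∩ R) := by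
    ext w
    simp only [nbhd, mem_inter, mem_filter, mem_biUnion]
    constructor
    · rintro ⟨⟨-, -, e, he, hze, hwe⟩, hwR⟩
      exact ⟨e, ⟨he, hze⟩, hwe, hwR⟩
    · rintro ⟨e, ⟨he, hze⟩, hwe, hwR⟩
      exact ⟨⟨hRV hwR, ne_of_mem_of_not_mem hwR hzR, e, he, hze, hwe⟩, hwR⟩
  rw [hunion, card_biUnion]
  intro e₁ he₁ e₂ he₂ hne
  simp only [coe_filter, Set.mem_ofPred_eq] at he₁ he₂
  refine disjoint_left.2 fun w hw₁ hw₂ => hne ?_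
  rw [mem_inter] at hw₁ hw₂
  exact hlin.eq_of_mem_of_mem he₁.1 he₂.1 (ne_of_mem_of_not_mem hw₁.2 hzR).symm he₁.2 hw₁.1 he₂.2
    hw₂.1

theorem stmt_15_general {α : Type*} [DecidableEq α] (V : Finset α) (E : Finset (Finset α))
    (hlin : Linear E) (htf : TriangleFree E)
    (x : α) (R : Finset α) (hR : R ⊆ nbhd V E x)
    (hmeet : ∀ e ∈ E, x ∈ e → (e ∩ R).card = 1)
    (z : α) (hz : z ∈ V \ insert x R) :
    hdeg (E.filter (fun e => Disjoint e (insert x R))) z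
      = hdeg E z - (nbhd V E z ∩ R).card := by
  have hzR : z ∉ R := fun h => (mem_sdiff.1 hz).2 (mem_insert_of_mem h)
  have hRV : R ⊆ V := hR.trans (filter_subset _ _)
  have hremain : hdeg (E.filter (fun e => Disjoint e (insert x R))) z
      = ((E.filter (fun e => z ∈ e)).filter (fun e => Disjoint e R)).card := by
    rw [hdeg_eq_card_filter, filter_filter, filter_filter]
    refine congrArg card (filter_congr fun e he => ?_)
    rw [disjoint_insert_iff_disjoint_of_meet hmeet he, and_comm]
  have hsplit := card_filter_add_card_filter_not (s := E.filter (fun e => z ∈ e))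
    (fun e => Disjoint e R)
  rw [hremain, hdeg_eq_card_filter, card_nbhd_inter_eq_sum_card_inter hlin hRV hzR,
    ← card_filter_not_disjoint_eq_sum_card_inter
      fun e he => card_inter_le_one_of_triangleFree hlin htf hR hmeet (mem_filter.1 he).1]
  omega

theorem stmt_15 {α : Type*} [DecidableEq α] (V : Finset α) (E : Finset (Finset α))
    (hVE : ∀ e ∈ E, e ⊆ V) (r : ℕ) (hr : 2 ≤ r)
    (hunif : Uniform E r) (hlin : Linear E) (htf : TriangleFree E)
    (x : α) (hx : x ∈ V) (R : Finset α) (hR : R ⊆ nbhd V E x)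
    (hmeet : ∀ e ∈ E, x ∈ e → (e ∩ R).card = 1)
    (z : α) (hz : z ∈ V \ insert x R) :
    hdeg (E.filter (fun e => Disjoint e (insert x R))) z
      = hdeg E z - (nbhd V E z ∩ R).card :=
  stmt_15_general V E hlin htf x R hR hmeet z hz
end
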